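/- arXiv:2005.08201 — 2 statements merged into one kernel-verified Lean document; each statement's English description precedes it below -/
import Mathlib

section
/- Let F_q be a finite field of characteristic 2 with q = 2^n elements. Then the group V = 1 + J(F_q[QD_16]) is nilpotent of class exactly 4; that is, the lower central series of V satisfies γ_5(V) = 1 but γ_4(V) ≠ 1. -/
/-- Relations for the quasidihedral group `QD_{2^k}`:
`a^(2^(k-1)) = 1`, `x^2 = 1`, `x * a * x = a^(2^(k-2)-1)`. -/
def qdRels (k : ℕ) : Set (FreeGroup (Fin 2)) :=
  {FreeGroup.of 0 ^ (2 ^ (k - 1)), FreeGroup.of 1 ^ 2,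
    FreeGroup.of 1 * FreeGroup.of 0 * FreeGroup.of 1 * (FreeGroup.of 0 ^ (2 ^ (k - 2) - 1))⁻¹}

/-- The quasidihedral group of order 16: `⟨a, x | a^8 = x^2 = 1, x a x = a^3⟩`. -/
def QD16 : Type := PresentedGroup (qdRels 4)

instance : Group QD16 := inferInstanceAs (Group (PresentedGroup (qdRels 4)))

/-!
In characteristic 2 the augmentation ideal `Δ` of `F[QD₁₆]` satisfies `Δ⁹ = 0`, so it is the
Jacobson radical and `V` is the group of units of augmentation `1`. If `Δ = I₀ ⊇ I₁ ⊇ ⋯` are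
two-sided ideals with `[I k, F[QD₁₆]] ⊆ I (k + 1)`, then `γ_{k+1}(V) ⊆ 1 + I k`, because
`⁅u, w⁆ - 1 = ((u - 1) w - w (u - 1)) (w u)⁻¹`. For `QD₁₆` the ideals generated by iterated
commutators give such a chain with `I 4 = 0`, hence `γ₅(V) = 1`; on the other hand
`⁅⁅⁅a, x⁆, 1 + a + x⁆, a⁆ ≠ 1`.

Every identity needed in `F[QD₁₆]` has coefficients in `𝔽₂`. Such elements are encoded as
16-bit masks, their products computed on masks, and the ideals above given as spans of explicit
echelon lists of masks whose closure properties are checked by `decide`.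
-/

open scoped commutatorElement

namespace TwoSidedIdeal

variable {R : Type*} [Ring R]

def oneAddUnits (I : TwoSidedIdeal R) : Subgroup Rˣ where
  carrier := {u | (u : R) - 1 ∈ I}
  one_mem' := by simp
  mul_mem' {u v} (hu : (u : R) - 1 ∈ I) (hv : (v : R) - 1 ∈ I) := by
    have : ((u * v : Rˣ) : R) - 1 = ((u : R) - 1) * v + ((v : R) - 1) := by
      simp only [Units.val_mul]; noncomm_ring
    show ((u * v : Rˣ) : R) - 1 ∈ I
    rw [this]
    exact I.add_mem (I.mul_mem_right _ _ hu) hv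
  inv_mem' {u} (hu : (u : R) - 1 ∈ I) := by
    have : ((u⁻¹ : Rˣ) : R) - 1 = -(((u : R) - 1) * ↑u⁻¹) := by
      simp [sub_mul]
    show ((u⁻¹ : Rˣ) : R) - 1 ∈ I
    rw [this]
    exact I.neg_mem (I.mul_mem_right _ _ hu)

variable {I J : TwoSidedIdeal R}

theorem mem_oneAddUnits {u : Rˣ} : u ∈ I.oneAddUnits ↔ (u : R) - 1 ∈ I := Iff.rfl

theorem oneAddUnits_bot : (⊥ : TwoSidedIdeal R).oneAddUnits = ⊥ := by
  ext u
  simp [mem_oneAddUnits, mem_bot, sub_eq_zero, Units.val_eq_one]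

theorem commutatorElement_mem_oneAddUnits (hIJ : ∀ x ∈ I, ∀ y, x * y - y * x ∈ J) {u : Rˣ}
    (hu : u ∈ I.oneAddUnits) (w : Rˣ) : ⁅u, w⁆ ∈ J.oneAddUnits := by
  have key : ((⁅u, w⁆ : Rˣ) : R) - 1 =
      (((u : R) - 1) * w - w * ((u : R) - 1)) * ↑(w * u)⁻¹ := by
    have : ((u : R) - 1) * w - w * ((u : R) - 1) = u * w - w * u := by noncomm_ring
    rw [this, sub_mul, ← Units.val_mul w u, Units.mul_inv, commutatorElement_def, mul_inv_rev]
    simp [mul_assoc]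
  rw [mem_oneAddUnits, key]
  exact J.mul_mem_right _ _ (hIJ _ hu w)

end TwoSidedIdeal

theorem lowerCentralSeries_le_oneAddUnits {R : Type*} [Ring R] (I : ℕ → TwoSidedIdeal R)
    (hI : ∀ k, ∀ x ∈ I k, ∀ y, x * y - y * x ∈ I (k + 1)) {H : Subgroup Rˣ}
    (hH : H ≤ (I 0).oneAddUnits) (k : ℕ) : H.lowerCentralSeries k ≤ (I k).oneAddUnits := by
  induction k with
  | zero => exact hH
  | succ k ih =>
    rw [Subgroup.lowerCentralSeries_succ, Subgroup.commutator_le]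
    exact fun u hu w _ => TwoSidedIdeal.commutatorElement_mem_oneAddUnits (hI k) (ih hu) w

theorem commutatorElement_mem_lowerCentralSeries_three {G : Type*} [Group G] {H : Subgroup G}
    {g₁ g₂ g₃ g₄ : G} (h₁ : g₁ ∈ H) (h₂ : g₂ ∈ H) (h₃ : g₃ ∈ H) (h₄ : g₄ ∈ H) :
    ⁅⁅⁅g₁, g₂⁆, g₃⁆, g₄⁆ ∈ H.lowerCentralSeries 3 :=
  Subgroup.commutator_mem_commutator
    (Subgroup.commutator_mem_commutator (Subgroup.commutator_mem_commutator h₁ h₂) h₃) h₄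

theorem Ideal.mem_jacobson_bot_of_forall_isNilpotent_mul {R : Type*} [Ring R] {x : R}
    (h : ∀ y, IsNilpotent (y * x)) : x ∈ (⊥ : Ideal R).jacobson := by
  refine Ideal.mem_jacobson_iff.2 fun y => ?_
  obtain ⟨u, hu⟩ := (h y).isUnit_add_one
  refine ⟨↑u⁻¹, ?_⟩
  rw [Ideal.mem_bot, mul_assoc, sub_eq_zero, ← mul_add_one, ← hu, Units.inv_mul]

namespace MonoidAlgebra

noncomputable def augmentation (F G : Type*) [CommRing F] [Group G] :
    MonoidAlgebra F G →ₐ[F] F :=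
  lift F F G 1

variable {G : Type*} [Group G]

@[simp]
theorem augmentation_of {F : Type*} [CommRing F] (g : G) : augmentation F G (of F G g) = 1 := by
  simp [augmentation]

theorem augmentation_eq_zero_of_mem_jacobson {F : Type*} [Field F] {x : MonoidAlgebra F G}
    (hx : x ∈ (⊥ : Ideal (MonoidAlgebra F G)).jacobson) : augmentation F G x = 0 := by
  have hmax := RingHom.ker_isMaximal_of_surjective (augmentation F G).toRingHom
    fun c => ⟨algebraMap F _ c, (augmentation F G).commutes c⟩
  exact Ideal.mem_sInf.1 hx ⟨bot_le, hmax⟩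

end MonoidAlgebra

def xorOverBits (f : ℕ → ℕ) (m : ℕ) : ℕ → ℕ
  | 0 => 0
  | n + 1 => xorOverBits f m n ^^^ if m.testBit n then f n else 0

/-- `min w (w ^^^ b)` clears the leading bit of `b` in `w` if it is set, so for a list `L` of
masks with strictly decreasing leading bits, `reduceMask L v = 0` iff `v` is in the `𝔽₂`-span
of `L`. The direction `= 0 → ∈ span` holds for every list. -/
def reduceMask (L : List ℕ) (v : ℕ) : ℕ := L.foldl (fun w b => min w (w ^^^ b)) v

def IsSpanCert (f : ℕ → ℕ → ℕ) (L L' L'' : List ℕ) : Prop :=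
  ∀ b ∈ L, ∀ b' ∈ L', reduceMask L'' (f b b') = 0

instance (f : ℕ → ℕ → ℕ) (L L' L'' : List ℕ) : Decidable (IsSpanCert f L L' L'') := by
  unfold IsSpanCert; infer_instance

structure GroupIndexing (G : Type*) [Group G] where
  card : ℕ
  elt : ℕ → G
  mulIdx : ℕ → ℕ → ℕ
  elt_zero : elt 0 = 1
  elt_mul (k j : ℕ) : elt k * elt j = elt (mulIdx k j)
  mulIdx_lt (k j : ℕ) : mulIdx k j < card
  elt_injOn : Set.InjOn elt (Set.Iio card)
  exists_elt_eq (g : G) : ∃ k < card, elt k = g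

namespace GroupIndexing

variable {G : Type*} [Group G] (T : GroupIndexing G)

def maskMul (m m' : ℕ) : ℕ :=
  xorOverBits (fun k => xorOverBits (fun j => 2 ^ T.mulIdx k j) m' T.card) m T.card

def maskBracket (m m' : ℕ) : ℕ := T.maskMul m m' ^^^ T.maskMul m' m

def eltMasks : List ℕ := (List.range T.card).map (2 ^ ·)

def augMasks : List ℕ := (List.range T.card).map (2 ^ · ^^^ 1)

def IsIdealCert (L : List ℕ) : Prop :=
  IsSpanCert T.maskMul T.eltMasks L L ∧ IsSpanCert T.maskMul L T.eltMasks L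

instance (L : List ℕ) : Decidable (T.IsIdealCert L) := by
  unfold IsIdealCert; infer_instance

variable (F : Type*) [CommRing F]

open MonoidAlgebra

noncomputable def ofMask (m : ℕ) : MonoidAlgebra F G :=
  ∑ k ∈ Finset.range T.card, if m.testBit k then of F G (T.elt k) else 0

noncomputable def maskSpan (L : List ℕ) : Submodule F (MonoidAlgebra F G) :=
  Submodule.span F (T.ofMask F '' {b | b ∈ L})

variable {F}

theorem ofMask_zero : T.ofMask F 0 = 0 := by simp [ofMask]

theorem ofMask_two_pow {t : ℕ} (ht : t < T.card) : T.ofMask F (2 ^ t) = of F G (T.elt t) := by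
  simp [ofMask, Nat.testBit_two_pow, ht]

theorem card_pos : 0 < T.card := (T.mulIdx_lt 0 0).pos

theorem ofMask_one : T.ofMask F 1 = 1 := by
  rw [← pow_zero 2, T.ofMask_two_pow T.card_pos, T.elt_zero, map_one]

theorem coeff_ofMask {t : ℕ} (ht : t < T.card) (m : ℕ) :
    (T.ofMask F m).coeff (T.elt t) = if m.testBit t then 1 else 0 := by
  classical
  simp only [ofMask, coeff_sum, Finsupp.finsetSum_apply]
  rw [Finset.sum_eq_single t]
  · split_ifs <;> simp [of_apply]
  · intro k hk hkt
    have : T.elt k ≠ T.elt t := fun h => hkt (T.elt_injOn (Finset.mem_range.1 hk) ht h)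
    split_ifs <;> simp [of_apply, this]
  · simp [ht]

theorem ofMask_ne [Nontrivial F] {m m' : ℕ} (h : ∃ t < T.card, m.testBit t ≠ m'.testBit t) :
    T.ofMask F m ≠ T.ofMask F m' := by
  obtain ⟨t, ht, hne⟩ := h
  intro heq
  have := congrArg (fun y => y.coeff (T.elt t)) heq
  simp only [T.coeff_ofMask ht] at this
  cases hm : m.testBit t <;> cases hm' : m'.testBit t <;> simp_all

theorem mem_maskSpan_eltMasks (y : MonoidAlgebra F G) : y ∈ T.maskSpan F T.eltMasks := by
  induction y using MonoidAlgebra.induction_on with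
  | of g =>
    obtain ⟨k, hk, rfl⟩ := T.exists_elt_eq g
    rw [← T.ofMask_two_pow hk]
    exact Submodule.subset_span ⟨2 ^ k, List.mem_map.2 ⟨k, List.mem_range.2 hk, rfl⟩, rfl⟩
  | add _ _ hx hy => exact add_mem hx hy
  | smul r _ hx => exact Submodule.smul_mem _ r hx

theorem maskSpan_nil : T.maskSpan F [] = ⊥ := by
  simp [maskSpan]

variable [CharP F 2]

instance : CharP (MonoidAlgebra F G) 2 := charP_of_injective_algebraMap' F 2

theorem ofMask_xor (m m' : ℕ) : T.ofMask F (m ^^^ m') = T.ofMask F m + T.ofMask F m' := by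
  simp only [ofMask, ← Finset.sum_add_distrib, Nat.testBit_xor]
  refine Finset.sum_congr rfl fun k _ => ?_
  cases m.testBit k <;> cases m'.testBit k <;> simp [CharTwo.add_self_eq_zero]

theorem ofMask_xorOverBits (f : ℕ → ℕ) (m n : ℕ) :
    T.ofMask F (xorOverBits f m n) =
      ∑ k ∈ Finset.range n, if m.testBit k then T.ofMask F (f k) else 0 := by
  induction n with
  | zero => simp [xorOverBits, ofMask_zero]
  | succ n ih =>
    rw [xorOverBits, ofMask_xor, ih, Finset.sum_range_succ]
    split_ifs <;> simp [ofMask_zero]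

theorem ofMask_maskMul (m m' : ℕ) :
    T.ofMask F (T.maskMul m m') = T.ofMask F m * T.ofMask F m' := by
  simp_rw [maskMul, ofMask_xorOverBits, T.ofMask_two_pow (T.mulIdx_lt _ _), ← T.elt_mul, map_mul]
  rw [ofMask, ofMask, Finset.sum_mul_sum]
  refine Finset.sum_congr rfl fun k _ => ?_
  split_ifs <;> simp [mul_ite]

theorem ofMask_maskBracket (m m' : ℕ) :
    T.ofMask F (T.maskBracket m m') =
      T.ofMask F m * T.ofMask F m' - T.ofMask F m' * T.ofMask F m := by
  rw [maskBracket, ofMask_xor, ofMask_maskMul, ofMask_maskMul, CharTwo.sub_eq_add]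

theorem ofMask_sub_ofMask_reduceMask_mem (L : List ℕ) (v : ℕ) :
    T.ofMask F v - T.ofMask F (reduceMask L v) ∈ T.maskSpan F L := by
  induction L generalizing v with
  | nil => simp [reduceMask]
  | cons b L ih =>
    have hmono : T.maskSpan F L ≤ T.maskSpan F (b :: L) :=
      Submodule.span_mono (Set.image_mono fun c hc => List.mem_cons_of_mem b hc)
    have hb : T.ofMask F b ∈ T.maskSpan F (b :: L) :=
      Submodule.subset_span ⟨b, List.mem_cons_self, rfl⟩
    set w := min v (v ^^^ b)
    have hw : T.ofMask F v - T.ofMask F w ∈ T.maskSpan F (b :: L) := by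
      rcases min_choice v (v ^^^ b) with h | h <;> simp only [w, h]
      · simp
      · simpa [ofMask_xor, CharTwo.sub_eq_add, ← add_assoc, CharTwo.add_self_eq_zero] using hb
    have : reduceMask (b :: L) v = reduceMask L w := rfl
    rw [this, ← sub_add_sub_cancel _ (T.ofMask F w)]
    exact add_mem hw (hmono (ih w))

theorem ofMask_mem_maskSpan {L : List ℕ} {v : ℕ} (h : reduceMask L v = 0) :
    T.ofMask F v ∈ T.maskSpan F L := by
  simpa [h, ofMask_zero] using T.ofMask_sub_ofMask_reduceMask_mem (F := F) L v

theorem map₂_mem_maskSpan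
    (β : MonoidAlgebra F G →ₗ[F] MonoidAlgebra F G →ₗ[F] MonoidAlgebra F G) {f : ℕ → ℕ → ℕ}
    (hβ : ∀ m m', β (T.ofMask F m) (T.ofMask F m') = T.ofMask F (f m m'))
    {L L' L'' : List ℕ} (hcert : IsSpanCert f L L' L'')
    {x y : MonoidAlgebra F G} (hx : x ∈ T.maskSpan F L) (hy : y ∈ T.maskSpan F L') :
    β x y ∈ T.maskSpan F L'' := by
  refine Submodule.map₂_le.1 ?_ x hx y hy
  rw [maskSpan, maskSpan, Submodule.map₂_span_span, Submodule.span_le]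
  rintro _ ⟨_, ⟨b, hb, rfl⟩, _, ⟨b', hb', rfl⟩, rfl⟩
  change β (T.ofMask F b) (T.ofMask F b') ∈ _
  rw [hβ]
  exact T.ofMask_mem_maskSpan (hcert b hb b' hb')

theorem mul_mem_maskSpan {L L' L'' : List ℕ} (hcert : IsSpanCert T.maskMul L L' L'')
    {x y : MonoidAlgebra F G} (hx : x ∈ T.maskSpan F L) (hy : y ∈ T.maskSpan F L') :
    x * y ∈ T.maskSpan F L'' :=
  T.map₂_mem_maskSpan (LinearMap.mul F _) (fun m m' => (T.ofMask_maskMul m m').symm) hcert hx hy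

theorem commutator_mem_maskSpan {L L' : List ℕ}
    (hcert : IsSpanCert T.maskBracket L T.eltMasks L')
    {x : MonoidAlgebra F G} (hx : x ∈ T.maskSpan F L) (y : MonoidAlgebra F G) :
    x * y - y * x ∈ T.maskSpan F L' :=
  T.map₂_mem_maskSpan (LinearMap.mul F _ - (LinearMap.mul F _).flip)
    (fun m m' => (T.ofMask_maskBracket m m').symm) hcert hx (T.mem_maskSpan_eltMasks y)

variable (F) in
noncomputable def maskIdeal (L : List ℕ) (hL : T.IsIdealCert L) :
    TwoSidedIdeal (MonoidAlgebra F G) :=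
  .mk' (T.maskSpan F L) (zero_mem _) add_mem neg_mem
    (fun hy => T.mul_mem_maskSpan hL.1 (T.mem_maskSpan_eltMasks _) hy)
    (fun hx => T.mul_mem_maskSpan hL.2 hx (T.mem_maskSpan_eltMasks _))

theorem mem_maskIdeal {L : List ℕ} {hL : T.IsIdealCert L} {y : MonoidAlgebra F G} :
    y ∈ T.maskIdeal F L hL ↔ y ∈ T.maskSpan F L :=
  TwoSidedIdeal.mem_mk' ..

theorem sub_augmentation_mem_maskSpan_augMasks (y : MonoidAlgebra F G) :
    y - algebraMap F _ (augmentation F G y) ∈ T.maskSpan F T.augMasks := by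
  induction y using MonoidAlgebra.induction_on with
  | of g =>
    obtain ⟨k, hk, rfl⟩ := T.exists_elt_eq g
    rw [augmentation_of, map_one, ← T.ofMask_two_pow hk, ← T.ofMask_one, CharTwo.sub_eq_add,
      ← ofMask_xor]
    exact Submodule.subset_span ⟨_, List.mem_map.2 ⟨k, List.mem_range.2 hk, rfl⟩, rfl⟩
  | add y z hy hz =>
    rw [map_add, map_add, add_sub_add_comm]
    exact add_mem hy hz
  | smul r y hy =>
    rw [map_smul, smul_eq_mul, map_mul, ← Algebra.smul_def, ← smul_sub]
    exact Submodule.smul_mem _ r hy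

theorem mem_maskSpan_augMasks {y : MonoidAlgebra F G} (hy : augmentation F G y = 0) :
    y ∈ T.maskSpan F T.augMasks := by
  simpa [hy] using T.sub_augmentation_mem_maskSpan_augMasks y

end GroupIndexing

namespace QD16

def a : QD16 := PresentedGroup.of 0

def x : QD16 := PresentedGroup.of 1

theorem a_pow_eight : a ^ 8 = 1 := by
  have := PresentedGroup.one_of_mem (rels := qdRels 4) (x := FreeGroup.of 0 ^ 2 ^ (4 - 1))
    (by simp [qdRels])
  simp at this
  exact this

theorem x_sq : x ^ 2 = 1 :=
  PresentedGroup.one_of_mem (rels := qdRels 4) (x := FreeGroup.of 1 ^ 2) (by simp [qdRels])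

theorem x_inv : x⁻¹ = x := inv_eq_of_mul_eq_one_right (by rw [← sq, x_sq])

theorem x_mul_a_mul_x : x * a * x = a ^ 3 := by
  have := PresentedGroup.one_of_mem (rels := qdRels 4)
    (x := FreeGroup.of 1 * FreeGroup.of 0 * FreeGroup.of 1 * (FreeGroup.of 0 ^ (2 ^ (4 - 2) - 1))⁻¹)
    (by simp [qdRels])
  simp [mul_inv_eq_one] at this
  exact this

theorem x_mul_a_pow (j : ℕ) : x * a ^ j = a ^ (3 * j) * x := by
  have hconj := conj_pow (a := x) (b := a) (i := j)
  rw [x_inv, x_mul_a_mul_x, ← pow_mul] at hconj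
  rw [hconj, mul_assoc, ← sq, x_sq, mul_one]

theorem x_pow_mul_a_pow (s j : ℕ) : x ^ s * a ^ j = a ^ (3 ^ s * j) * x ^ s := by
  induction s with
  | zero => simp
  | succ s ih =>
    rw [pow_succ', mul_assoc, ih, ← mul_assoc, x_mul_a_pow, mul_assoc, ← mul_assoc 3, ← pow_succ']

def elem (k : ℕ) : QD16 := a ^ (k % 8) * x ^ (k / 8)

def mulCode (k j : ℕ) : ℕ := (k % 8 + 3 ^ (k / 8) * (j % 8)) % 8 + 8 * ((k / 8 + j / 8) % 2)

theorem mulCode_lt (k j : ℕ) : mulCode k j < 16 := by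
  unfold mulCode; omega

theorem elem_zero : elem 0 = 1 := by simp [elem]

theorem elem_one : elem 1 = a := by simp [elem]

theorem elem_eight : elem 8 = x := by simp [elem]

theorem elem_mul (k j : ℕ) : elem k * elem j = elem (mulCode k j) := by
  have hmul : elem k * elem j = a ^ (k % 8 + 3 ^ (k / 8) * (j % 8)) * x ^ (k / 8 + j / 8) := by
    rw [elem, elem, mul_assoc, ← mul_assoc (x ^ _), x_pow_mul_a_pow]; group
  rw [hmul, elem, mulCode, pow_eq_pow_mod _ a_pow_eight, pow_eq_pow_mod (k / 8 + j / 8) x_sq]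
  generalize k % 8 + 3 ^ (k / 8) * (j % 8) = m
  congr 2 <;> omega

theorem exists_elem_eq (g : QD16) : ∃ k < 16, elem k = g := by
  have hg : g ∈ Subgroup.closure (Set.range PresentedGroup.of) := by
    rw [PresentedGroup.closure_range_of]; trivial
  induction hg using Subgroup.closure_induction'' with
  | mem _ h =>
    obtain ⟨i, rfl⟩ := h
    fin_cases i
    · exact ⟨1, by norm_num, elem_one⟩
    · exact ⟨8, by norm_num, elem_eight⟩
  | inv_mem _ h =>
    obtain ⟨i, rfl⟩ := h
    fin_cases i
    · show ∃ k < 16, elem k = a⁻¹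
      refine ⟨7, by norm_num, ?_⟩
      rw [eq_inv_iff_mul_eq_one, ← elem_one, elem_mul]
      rfl
    · show ∃ k < 16, elem k = x⁻¹
      exact ⟨8, by norm_num, by rw [x_inv, elem_eight]⟩
  | one => exact ⟨0, by norm_num, elem_zero⟩
  | mul _ _ _ _ hg hh =>
    obtain ⟨k, -, rfl⟩ := hg
    obtain ⟨j, -, rfl⟩ := hh
    exact ⟨mulCode k j, mulCode_lt k j, (elem_mul k j).symm⟩

def mulThree : Equiv.Perm (ZMod 8) := ⟨(3 * ·), (3 * ·), by decide, by decide⟩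

def toPerm : QD16 →* Equiv.Perm (ZMod 8) :=
  PresentedGroup.toGroup (f := ![Equiv.addRight 1, mulThree]) (by
    intro r hr
    simp only [qdRels, Set.mem_insert_iff, Set.mem_singleton_iff] at hr
    rcases hr with rfl | rfl | rfl <;> decide)

theorem toPerm_a : toPerm a = Equiv.addRight 1 := PresentedGroup.toGroup.of _

theorem toPerm_x : toPerm x = mulThree := PresentedGroup.toGroup.of _

theorem elem_injOn : Set.InjOn elem (Set.Iio 16) := by
  intro k hk j hj h
  have key : ∀ k < 16, ∀ j < 16,
      Equiv.addRight (1 : ZMod 8) ^ (k % 8) * mulThree ^ (k / 8) =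
        Equiv.addRight 1 ^ (j % 8) * mulThree ^ (j / 8) → k = j := by decide
  have hperm := congrArg toPerm h
  simp only [elem, map_mul, map_pow, toPerm_a, toPerm_x] at hperm
  exact key k hk j hj hperm

theorem commutatorElement_a_x : ⁅a, x⁆ = elem 6 := by
  have ha : a⁻¹ = elem 7 := by
    rw [← elem_one, inv_eq_iff_mul_eq_one, elem_mul]; rfl
  rw [commutatorElement_def, ha, x_inv, ← elem_one, ← elem_eight, elem_mul, elem_mul, elem_mul]
  rfl

theorem elem_six_inv : (elem 6)⁻¹ = elem 2 := by
  rw [inv_eq_iff_mul_eq_one, elem_mul]; rfl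

def indexing : GroupIndexing QD16 where
  card := 16
  elt := elem
  mulIdx := mulCode
  elt_zero := elem_zero
  elt_mul := elem_mul
  mulIdx_lt := mulCode_lt
  elt_injOn := elem_injOn
  exists_elt_eq := exists_elem_eq

/-- Echelon bases, found by Gaussian elimination over `𝔽₂`, of the ideals generated by iterated
commutators: `lieMasks (k + 1)` spans the ideal generated by the `[y, z]` with `y` in the span of
`lieMasks k`. -/
def lieMasks : ℕ → List ℕ
  | 0 => indexing.augMasks
  | 1 => [33280, 20480, 8704, 4352, 2560, 1280, 160, 68, 34, 20, 10, 5]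
  | 2 => [43520, 17408, 8704, 4352, 170, 68, 34, 17]
  | 3 => [43520, 21760, 170, 85]
  | _ => []

/-- Echelon bases of the powers `Δ ^ k` of the augmentation ideal `Δ`. -/
def augPowMasks : ℕ → List ℕ
  | 0 => indexing.eltMasks
  | 1 => indexing.augMasks
  | 2 => [49155, 24642, 12360, 6153, 3105, 1572, 900, 136, 68, 34, 17, 10, 5]
  | 3 => [41059, 16667, 10381, 4471, 2614, 1478, 153, 85, 51, 30, 15]
  | 4 => [42405, 27030, 8891, 4471, 4080, 170, 85, 34, 17]
  | 5 => [47906, 30481, 8891, 4471, 255, 85, 51]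
  | 6 => [43605, 21930, 13260, 255, 85]
  | 7 => [65535, 21930, 255]
  | 8 => [65535]
  | _ => []

theorem lieMasks_isIdealCert_of_lt : ∀ k < 4, indexing.IsIdealCert (lieMasks k) := by
  decide

theorem lieMasks_bracketCert : ∀ k < 4,
    IsSpanCert indexing.maskBracket (lieMasks k) indexing.eltMasks (lieMasks (k + 1)) := by
  decide

theorem augPowMasks_mulCert : ∀ k < 9,
    IsSpanCert indexing.maskMul (augPowMasks k) indexing.augMasks (augPowMasks (k + 1)) := by
  decide

theorem lieMasks_isIdealCert (k : ℕ) : indexing.IsIdealCert (lieMasks k) := by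
  rcases lt_or_ge k 4 with hk | hk
  · exact lieMasks_isIdealCert_of_lt k hk
  · obtain ⟨j, rfl⟩ := Nat.exists_eq_add_of_le' hk
    simp [GroupIndexing.IsIdealCert, IsSpanCert, lieMasks]

open MonoidAlgebra GroupIndexing

section CharTwo

variable {F : Type*} [CommRing F] [CharP F 2]

theorem pow_mem_maskSpan_augPowMasks {y : MonoidAlgebra F QD16}
    (hy : y ∈ indexing.maskSpan F indexing.augMasks) {k : ℕ} (hk : k ≤ 9) :
    y ^ k ∈ indexing.maskSpan F (augPowMasks k) := by
  induction k with
  | zero => exact indexing.mem_maskSpan_eltMasks _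
  | succ k ih =>
    rw [pow_succ]
    exact indexing.mul_mem_maskSpan (augPowMasks_mulCert k (by omega)) (ih (by omega)) hy

theorem pow_nine_eq_zero {y : MonoidAlgebra F QD16} (hy : augmentation F QD16 y = 0) :
    y ^ 9 = 0 := by
  simpa [augPowMasks, maskSpan_nil] using
    pow_mem_maskSpan_augPowMasks (indexing.mem_maskSpan_augMasks hy) le_rfl

variable (F) in
noncomputable def lieFiltration (k : ℕ) : TwoSidedIdeal (MonoidAlgebra F QD16) :=
  indexing.maskIdeal F (lieMasks k) (lieMasks_isIdealCert k)

theorem mem_lieFiltration_zero {y : MonoidAlgebra F QD16} (hy : augmentation F QD16 y = 0) :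
    y ∈ lieFiltration F 0 :=
  indexing.mem_maskIdeal.2 (indexing.mem_maskSpan_augMasks hy)

theorem commutator_mem_lieFiltration (k : ℕ) :
    ∀ y ∈ lieFiltration F k, ∀ z, y * z - z * y ∈ lieFiltration F (k + 1) := by
  intro y hy z
  rw [lieFiltration, indexing.mem_maskIdeal] at hy ⊢
  rcases lt_or_ge k 4 with hk | hk
  · exact indexing.commutator_mem_maskSpan (lieMasks_bracketCert k hk) hy z
  · obtain ⟨j, rfl⟩ := Nat.exists_eq_add_of_le' hk
    simp only [lieMasks, maskSpan_nil, Submodule.mem_bot] at hy ⊢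
    simp [hy]

theorem lieFiltration_four : lieFiltration F 4 = ⊥ := by
  ext y
  rw [lieFiltration, indexing.mem_maskIdeal, show lieMasks 4 = [] from rfl, maskSpan_nil,
    Submodule.mem_bot, TwoSidedIdeal.mem_bot]

variable (F)

theorem ofMask_259 : indexing.ofMask F 259 = 1 + of F QD16 a + of F QD16 x := by
  rw [show 259 = 1 ^^^ 2 ^ 1 ^^^ 2 ^ 8 from rfl, ofMask_xor, ofMask_xor, ofMask_one,
    indexing.ofMask_two_pow (by decide), indexing.ofMask_two_pow (by decide),
    show indexing.elt 1 = a from elem_one, show indexing.elt 8 = x from elem_eight]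

/-- `62547` is the mask of `∑ k < 9, (a + x) ^ k`, the inverse of `1 + (a + x)` since
`(a + x) ^ 9 = 0`. -/
noncomputable def witnessUnit : (MonoidAlgebra F QD16)ˣ where
  val := 1 + of F QD16 a + of F QD16 x
  inv := indexing.ofMask F 62547
  val_inv := by
    rw [← ofMask_259, ← ofMask_maskMul, show indexing.maskMul 259 62547 = 1 by decide, ofMask_one]
  inv_val := by
    rw [← ofMask_259, ← ofMask_maskMul, show indexing.maskMul 62547 259 = 1 by decide, ofMask_one]

set_option maxRecDepth 10000 in
theorem commutator_witnessUnit_ne_one :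
    ⁅⁅⁅(of F QD16).toHomUnits a, (of F QD16).toHomUnits x⁆, witnessUnit F⁆,
      (of F QD16).toHomUnits a⁆ ≠ 1 := by
  have hof : ∀ k < 16, of F QD16 (elem k) = indexing.ofMask F (2 ^ k) :=
    fun k hk => (indexing.ofMask_two_pow hk).symm
  have hval : ((witnessUnit F : (MonoidAlgebra F QD16)ˣ) : MonoidAlgebra F QD16) =
      indexing.ofMask F 259 := (ofMask_259 F).symm
  have hinv : (((witnessUnit F)⁻¹ : (MonoidAlgebra F QD16)ˣ) : MonoidAlgebra F QD16) =
      indexing.ofMask F 62547 := rfl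
  rw [← map_commutatorElement, commutatorElement_a_x, Ne, commutatorElement_eq_one_iff_mul_comm,
    Units.ext_iff]
  simp only [commutatorElement_def, Units.val_mul, ← map_inv, MonoidHom.coe_toHomUnits,
    elem_six_inv, hval, hinv, ← elem_one, hof 6 (by decide), hof 2 (by decide),
    hof 1 (by decide), ← ofMask_maskMul]
  have := CharP.nontrivial_of_char_ne_one (R := F) (v := 2) (by decide)
  exact indexing.ofMask_ne (by decide)

end CharTwo

theorem mem_jacobson_bot_iff {F : Type*} [Field F] [CharP F 2] {y : MonoidAlgebra F QD16} :
    y ∈ (⊥ : Ideal (MonoidAlgebra F QD16)).jacobson ↔ augmentation F QD16 y = 0 := by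
  refine ⟨augmentation_eq_zero_of_mem_jacobson, fun hy => ?_⟩
  refine Ideal.mem_jacobson_bot_of_forall_isNilpotent_mul fun z => ⟨9, pow_nine_eq_zero ?_⟩
  rw [map_mul, hy, mul_zero]

end QD16

/-- Mathlib's `lowerCentralSeries V k` starts at `k = 0` with `V` itself, so the paper's
`γ₅(V)` and `γ₄(V)` are `lowerCentralSeries V 4` and `lowerCentralSeries V 3`. -/
theorem oneAddJacobson_nilpotencyClass_QD16_general (F : Type) [Field F] [CharP F 2]
    (V : Subgroup (MonoidAlgebra F QD16)ˣ)
    (hV : ∀ u : (MonoidAlgebra F QD16)ˣ,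
      u ∈ V ↔ (u : MonoidAlgebra F QD16) - 1 ∈ (⊥ : Ideal (MonoidAlgebra F QD16)).jacobson) :
    lowerCentralSeries V 4 = ⊥ ∧ lowerCentralSeries V 3 ≠ ⊥ := by
  have hV' : ∀ u, u ∈ V ↔ MonoidAlgebra.augmentation F QD16 u = 1 := fun u => by
    rw [hV, QD16.mem_jacobson_bot_iff, map_sub, map_one, sub_eq_zero]
  have hV₀ : V ≤ (QD16.lieFiltration F 0).oneAddUnits := fun u hu =>
    QD16.mem_lieFiltration_zero (by rw [map_sub, (hV' u).1 hu, map_one, sub_self])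
  have hof : ∀ g, (MonoidAlgebra.of F QD16).toHomUnits g ∈ V := fun g =>
    (hV' _).2 (MonoidAlgebra.augmentation_of g)
  have hw : QD16.witnessUnit F ∈ V := by
    simp only [hV', QD16.witnessUnit, map_add, map_one, MonoidAlgebra.augmentation_of,
      CharTwo.add_cancel_right]
  change V.lowerCentralSeries 4 = ⊥ ∧ V.lowerCentralSeries 3 ≠ ⊥
  refine ⟨?_, fun hbot => QD16.commutator_witnessUnit_ne_one F ?_⟩
  · have := lowerCentralSeries_le_oneAddUnits _ QD16.commutator_mem_lieFiltration hV₀ 4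
    rwa [QD16.lieFiltration_four, TwoSidedIdeal.oneAddUnits_bot, le_bot_iff] at this
  · have := commutatorElement_mem_lowerCentralSeries_three (hof QD16.a) (hof QD16.x) hw
      (hof QD16.a)
    rwa [hbot, Subgroup.mem_bot] at this

/-- `V = 1 + J(F_q[QD_16])` is nilpotent of class exactly 4: in the paper's indexing
`γ₅(V) = 1` but `γ₄(V) ≠ 1`, which corresponds to `lowerCentralSeries V 4 = ⊥` and
`lowerCentralSeries V 3 ≠ ⊥` in Mathlib's indexing (`lowerCentralSeries V 0 = ⊤`). -/
theorem oneAddJacobson_nilpotencyClass_QD16 (F : Type) [Field F] [Fintype F] [CharP F 2]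
    (n : ℕ) (hn : 0 < n) (hq : Fintype.card F = 2 ^ n)
    (V : Subgroup (MonoidAlgebra F QD16)ˣ)
    (hV : ∀ u : (MonoidAlgebra F QD16)ˣ,
      u ∈ V ↔ (u : MonoidAlgebra F QD16) - 1 ∈ (⊥ : Ideal (MonoidAlgebra F QD16)).jacobson) :
    lowerCentralSeries V 4 = ⊥ ∧ lowerCentralSeries V 3 ≠ ⊥ :=
  oneAddJacobson_nilpotencyClass_QD16_general F V hV
end

section
/- Let F_q be a finite field of characteristic 2 with q = 2^n elements. Then the group V_1 = 1 + J(F_q[QD_32]) has exponent 16; that is, y^16 = 1 for every y in V_1, and 16 is the least such positive integer. -/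
/-- The quasidihedral group of order 32: `⟨a, x | a^16 = x^2 = 1, x a x = a^7⟩`. -/
def QD32 : Type := PresentedGroup (qdRels 5)

instance : Group QD32 := inferInstanceAs (Group (PresentedGroup (qdRels 5)))

open Polynomial MonoidAlgebra

theorem Polynomial.X_sub_one_pow_dvd_comp_X_pow {R : Type*} [CommRing R] {k : ℕ} {p : R[X]}
    (h : (X - 1) ^ k ∣ p) (n : ℕ) : (X - 1) ^ k ∣ p.comp (X ^ n) := by
  obtain ⟨q, rfl⟩ := h
  rw [mul_comp, pow_comp, sub_comp, X_comp, one_comp]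
  exact dvd_mul_of_dvd_left (pow_dvd_pow_of_dvd (sub_one_dvd_pow_sub_one _ n) k) _

theorem Polynomial.X_sub_one_sq_dvd_add_comp_X_pow {R : Type*} [CommRing R] [CharP R 2]
    (p : R[X]) {n : ℕ} (hn : Odd n) : (X - 1) ^ 2 ∣ p + p.comp (X ^ n) := by
  obtain ⟨m, rfl⟩ := hn
  have hdiff : X - X ^ (2 * m + 1) ∣ p - p.comp (X ^ (2 * m + 1)) := by
    have h := sub_dvd_eval_sub X (X ^ (2 * m + 1)) (p.map C)
    rwa [eval_map, eval_map, eval₂_C_X] at h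
  have hfactor : (X - X ^ (2 * m + 1) : R[X]) = X * (X ^ m - 1) ^ 2 := by
    linear_combination (X ^ (m + 1) - X ^ (2 * m + 1) : R[X]) * CharTwo.two_eq_zero (R := R[X])
  rw [← CharTwo.sub_eq_add]
  refine dvd_trans ?_ (hfactor ▸ hdiff)
  exact dvd_mul_of_dvd_right (pow_dvd_pow_of_dvd (sub_one_dvd_pow_sub_one _ m) 2) _

theorem pow_char_pow_eq_one_of_sub_one_pow_eq_zero {R : Type*} [Ring R] (p n : ℕ) [Fact p.Prime]
    [CharP R p] {y : R} (h : (y - 1) ^ p ^ n = 0) : y ^ p ^ n = 1 := by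
  rwa [sub_pow_char_pow_of_commute p n (Commute.one_right y), one_pow, sub_eq_zero] at h

theorem Ideal.jacobson_bot_eq_ker_of_isNilpotent {R K F : Type*} [Ring R] [DivisionRing K]
    [FunLike F R K] [RingHomClass F R K] (f : F) (hf : Function.Surjective f)
    (hnil : ∀ r ∈ RingHom.ker f, IsNilpotent r) :
    (⊥ : Ideal R).jacobson = RingHom.ker f := by
  have hmax := RingHom.ker_isMaximal_of_surjective f hf
  refine le_antisymm (sInf_le ⟨bot_le, hmax⟩) fun r hr => Ideal.mem_jacobson_iff.mpr fun s => ?_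
  obtain ⟨u, hu⟩ := (hnil (s * r) ((RingHom.ker f).mul_mem_left s hr)).isUnit_add_one
  refine ⟨↑u⁻¹, ?_⟩
  rw [mul_assoc, ← mul_add_one, ← hu, u.inv_mul, sub_self]
  exact Submodule.zero_mem _

noncomputable def MonoidAlgebra.augmentation_s13 (k G : Type*) [CommSemiring k] [Monoid G] :
    MonoidAlgebra k G →ₐ[k] k :=
  lift k k G 1

theorem MonoidAlgebra.augmentation_of_s13 {k G : Type*} [CommSemiring k] [Monoid G] (g : G) :
    augmentation_s13 k G (of k G g) = 1 :=
  lift_of _ g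

theorem MonoidAlgebra.augmentation_surjective (k G : Type*) [CommSemiring k] [Monoid G] :
    Function.Surjective (augmentation_s13 k G) :=
  fun c => ⟨algebraMap k _ c, AlgHom.commutes _ c⟩

namespace QD32

def a : QD32 := PresentedGroup.of (rels := qdRels 5) 0

def x : QD32 := PresentedGroup.of (rels := qdRels 5) 1

theorem mk_eq_one_of_mem_rels {r : FreeGroup (Fin 2)} (hr : r ∈ qdRels 5) :
    PresentedGroup.mk (qdRels 5) r = 1 :=
  (QuotientGroup.eq_one_iff r).mpr (Subgroup.subset_normalClosure hr)

theorem a_pow_sixteen : a ^ 16 = 1 := by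
  have h := mk_eq_one_of_mem_rels (r := FreeGroup.of 0 ^ 2 ^ (5 - 1)) (by simp [qdRels])
  rwa [map_pow] at h

theorem x_mul_x : x * x = 1 := by
  have h := mk_eq_one_of_mem_rels (r := FreeGroup.of 1 ^ 2) (by simp [qdRels])
  rwa [map_pow, sq] at h

theorem x_mul_a_mul_x : x * a * x = a ^ 7 := by
  have h := mk_eq_one_of_mem_rels (r := FreeGroup.of 1 * FreeGroup.of 0 * FreeGroup.of 1 *
      (FreeGroup.of 0 ^ (2 ^ (5 - 2) - 1))⁻¹) (by simp [qdRels])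
  rwa [map_mul, map_inv, map_pow, mul_inv_eq_one] at h

theorem x_inv : x⁻¹ = x := inv_eq_of_mul_eq_one_right x_mul_x

theorem x_mul_a_pow (n : ℕ) : x * a ^ n = a ^ (7 * n) * x := by
  calc x * a ^ n = (x * a ^ n * x⁻¹) * x := by group
    _ = a ^ (7 * n) * x := by rw [← conj_pow, x_inv, x_mul_a_mul_x, pow_mul]

theorem closure_a_x : Subgroup.closure ({a, x} : Set QD32) = ⊤ := by
  have hgen : ({a, x} : Set QD32) = Set.range PresentedGroup.of := by
    ext g
    constructor
    · rintro (rfl | rfl)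
      exacts [⟨0, rfl⟩, ⟨1, rfl⟩]
    · rintro ⟨i, rfl⟩
      fin_cases i
      exacts [.inl rfl, .inr rfl]
  rw [hgen]
  exact PresentedGroup.closure_range_of _

theorem exists_eq_a_pow_or_eq_a_pow_mul_x (g : QD32) :
    ∃ k : ℕ, g = a ^ k ∨ g = a ^ k * x := by
  have hg : g ∈ Subgroup.closure {a, x} := by
    rw [closure_a_x]
    trivial
  induction hg using Subgroup.closure_induction'' with
  | mem g hg =>
    rcases hg with rfl | rfl
    · exact ⟨1, .inl (pow_one a).symm⟩
    · exact ⟨0, .inr (one_mul x).symm⟩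
  | inv_mem g hg =>
    rcases hg with rfl | rfl
    · exact ⟨15, .inl (inv_eq_of_mul_eq_one_right (by rw [← pow_succ', a_pow_sixteen]))⟩
    · exact ⟨0, .inr (by rw [pow_zero, one_mul, x_inv])⟩
  | one => exact ⟨0, .inl (pow_zero a).symm⟩
  | mul g h _ _ hg hh =>
    obtain ⟨j, rfl | rfl⟩ := hg <;> obtain ⟨k, rfl | rfl⟩ := hh
    · exact ⟨j + k, .inl (pow_add a j k).symm⟩
    · exact ⟨j + k, .inr (by rw [pow_add, mul_assoc])⟩
    · exact ⟨j + 7 * k, .inr (by rw [pow_add, mul_assoc, x_mul_a_pow, mul_assoc])⟩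
    · refine ⟨j + 7 * k, .inl ?_⟩
      rw [pow_add, mul_assoc, ← mul_assoc x, x_mul_a_pow, mul_assoc, x_mul_x, mul_one]

def mulSeven : Equiv.Perm (ZMod 16) where
  toFun z := 7 * z
  invFun z := 7 * z
  left_inv := by decide
  right_inv := by decide

theorem lift_affine_of_mem_rels :
    ∀ r ∈ qdRels 5, FreeGroup.lift ![Equiv.addRight (1 : ZMod 16), mulSeven] r = 1 := by
  simp only [qdRels, Set.mem_insert_iff, Set.mem_singleton_iff]
  rintro r (rfl | rfl | rfl) <;>
    simp only [map_mul, map_inv, map_pow, FreeGroup.lift_apply_of, Matrix.cons_val_zero,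
      Matrix.cons_val_one, Matrix.cons_val_fin_one] <;> decide

def toAffine : QD32 →* Equiv.Perm (ZMod 16) := PresentedGroup.toGroup lift_affine_of_mem_rels

theorem toAffine_a : toAffine a = Equiv.addRight 1 :=
  PresentedGroup.toGroup.of lift_affine_of_mem_rels

theorem orderOf_a : orderOf a = 16 := by
  refine orderOf_eq_prime_pow (p := 2) (n := 3) (fun h => ?_) a_pow_sixteen
  have h' := congrArg toAffine h
  rw [map_pow, map_one, toAffine_a] at h'
  exact absurd h' (by decide)

section GroupAlgebra

variable {F : Type*} [CommRing F]

theorem of_x_mul_aeval (p : F[X]) :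
    of F QD32 x * aeval (of F QD32 a) p = aeval (of F QD32 a) (p.comp (X ^ 7)) * of F QD32 x := by
  induction p using Polynomial.induction_on' with
  | add p q hp hq => rw [map_add, add_comp, map_add, mul_add, add_mul, hp, hq]
  | monomial n c =>
    rw [aeval_comp, aeval_X_pow, aeval_monomial, aeval_monomial, Algebra.left_comm, ← pow_mul,
      ← map_pow, ← map_pow, ← map_mul, x_mul_a_pow, map_mul, mul_assoc]

theorem aeval_add_aeval_mul_x_mul (u v u' v' : F[X]) :
    (aeval (of F QD32 a) u + aeval (of F QD32 a) v * of F QD32 x) *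
        (aeval (of F QD32 a) u' + aeval (of F QD32 a) v' * of F QD32 x) =
      aeval (of F QD32 a) (u * u' + v * v'.comp (X ^ 7)) +
        aeval (of F QD32 a) (u * v' + v * u'.comp (X ^ 7)) * of F QD32 x := by
  have hxx : of F QD32 x * of F QD32 x = 1 := by rw [← map_mul, x_mul_x, map_one]
  have hx (p : F[X]) (y : MonoidAlgebra F QD32) : of F QD32 x * (aeval (of F QD32 a) p * y) =
      aeval (of F QD32 a) (p.comp (X ^ 7)) * (of F QD32 x * y) := by
    rw [← mul_assoc, of_x_mul_aeval, mul_assoc]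
  simp only [map_add, map_mul, add_mul, mul_add, mul_assoc, hx, of_x_mul_aeval, hxx, mul_one]
  abel

variable (F) in
/-- The elements of the ideal `(a - 1) ^ k F[QD32]`, each written as `u(a) + v(a) x`. -/
def filtration (k : ℕ) : Set (MonoidAlgebra F QD32) :=
  {y | ∃ u v : F[X], (X - 1) ^ k ∣ u ∧ (X - 1) ^ k ∣ v ∧
    aeval (of F QD32 a) u + aeval (of F QD32 a) v * of F QD32 x = y}

theorem mul_mem_filtration {k l : ℕ} {y z : MonoidAlgebra F QD32} (hy : y ∈ filtration F k)
    (hz : z ∈ filtration F l) : y * z ∈ filtration F (k + l) := by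
  obtain ⟨u, v, hu, hv, rfl⟩ := hy
  obtain ⟨u', v', hu', hv', rfl⟩ := hz
  refine ⟨_, _, ?_, ?_, (aeval_add_aeval_mul_x_mul u v u' v').symm⟩ <;> rw [pow_add]
  · exact dvd_add (mul_dvd_mul hu hu') (mul_dvd_mul hv (X_sub_one_pow_dvd_comp_X_pow hv' 7))
  · exact dvd_add (mul_dvd_mul hu hv') (mul_dvd_mul hv (X_sub_one_pow_dvd_comp_X_pow hu' 7))

theorem pow_mem_filtration {k : ℕ} {y : MonoidAlgebra F QD32} (hy : y ∈ filtration F k) (n : ℕ) :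
    y ^ n ∈ filtration F (k * n) := by
  induction n with
  | zero => exact ⟨1, 0, by simp, by simp, by simp⟩
  | succ n ih =>
    rw [pow_succ, mul_add_one]
    exact mul_mem_filtration ih hy

theorem mem_filtration_zero (y : MonoidAlgebra F QD32) : y ∈ filtration F 0 := by
  simp only [filtration, pow_zero, one_dvd, true_and]
  induction y using MonoidAlgebra.induction_on with
  | of g =>
    obtain ⟨k, rfl | rfl⟩ := exists_eq_a_pow_or_eq_a_pow_mul_x g
    · exact ⟨X ^ k, 0, by simp⟩
    · exact ⟨0, X ^ k, by simp⟩
  | add y z hy hz =>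
    obtain ⟨u, v, rfl⟩ := hy
    obtain ⟨u', v', rfl⟩ := hz
    exact ⟨u + u', v + v', by rw [map_add, map_add, add_mul]; abel⟩
  | smul c y hy =>
    obtain ⟨u, v, rfl⟩ := hy
    exact ⟨c • u, c • v, by rw [map_smul, map_smul, smul_add, smul_mul_assoc]⟩

theorem eq_zero_of_mem_filtration_sixteen [CharP F 2] {y : MonoidAlgebra F QD32}
    (hy : y ∈ filtration F 16) : y = 0 := by
  obtain ⟨_, _, ⟨u, rfl⟩, ⟨v, rfl⟩, rfl⟩ := hy
  have h16 : aeval (of F QD32 a) ((X - 1) ^ 16 : F[X]) = 0 := by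
    have h : ((X - 1) ^ 16 : F[X]) = X ^ 16 - 1 := by
      simpa using sub_pow_char_pow (p := 2) (n := 4) (X : F[X]) 1
    rw [h, map_sub, map_pow, aeval_X, ← map_pow, a_pow_sixteen, map_one, map_one, sub_self]
  rw [map_mul, map_mul, h16, zero_mul, zero_mul, zero_mul, add_zero]

theorem augmentation_aeval (p : F[X]) :
    augmentation_s13 F QD32 (aeval (of F QD32 a) p) = p.eval 1 := by
  rw [← aeval_algHom_apply, augmentation_of_s13, coe_aeval_eq_eval]

theorem sq_mem_filtration_two [CharP F 2] {y : MonoidAlgebra F QD32}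
    (hy : augmentation_s13 F QD32 y = 0) : y ^ 2 ∈ filtration F 2 := by
  obtain ⟨u, v, -, -, rfl⟩ := mem_filtration_zero y
  have huv : X - 1 ∣ u + v := by
    rw [← C_1, dvd_iff_isRoot, IsRoot, eval_add, ← augmentation_aeval, ← augmentation_aeval, ← hy,
      map_add, map_mul, augmentation_of_s13, mul_one]
  have hodd : Odd 7 := by decide
  rw [sq]
  refine ⟨_, _, ?_, ?_, (aeval_add_aeval_mul_x_mul u v u v).symm⟩
  · have h : u * u + v * v.comp (X ^ 7) = (u + v) ^ 2 + v * (v + v.comp (X ^ 7)) := by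
      linear_combination (-(v * (u + v))) * CharTwo.two_eq_zero (R := F[X])
    rw [h]
    exact dvd_add (pow_dvd_pow_of_dvd huv 2)
      (dvd_mul_of_dvd_right (X_sub_one_sq_dvd_add_comp_X_pow v hodd) _)
  · rw [show u * v + v * u.comp (X ^ 7) = v * (u + u.comp (X ^ 7)) by ring]
    exact dvd_mul_of_dvd_right (X_sub_one_sq_dvd_add_comp_X_pow u hodd) _

theorem pow_sixteen_eq_zero_of_augmentation_eq_zero [CharP F 2] {y : MonoidAlgebra F QD32}
    (hy : augmentation_s13 F QD32 y = 0) : y ^ 16 = 0 := by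
  apply eq_zero_of_mem_filtration_sixteen
  simpa only [← pow_mul] using pow_mem_filtration (sq_mem_filtration_two hy) 8

end GroupAlgebra

theorem jacobson_bot_eq_ker_augmentation (F : Type*) [Field F] [CharP F 2] :
    (⊥ : Ideal (MonoidAlgebra F QD32)).jacobson = RingHom.ker (augmentation_s13 F QD32) :=
  Ideal.jacobson_bot_eq_ker_of_isNilpotent _ (augmentation_surjective F QD32)
    fun _ hy => ⟨16, pow_sixteen_eq_zero_of_augmentation_eq_zero hy⟩

end QD32

theorem oneAddJacobson_exponent_QD32_general (F : Type) [Field F] [CharP F 2]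
    (V₁ : Subgroup (MonoidAlgebra F QD32)ˣ)
    (hV : ∀ u : (MonoidAlgebra F QD32)ˣ,
      u ∈ V₁ ↔ (u : MonoidAlgebra F QD32) - 1 ∈ (⊥ : Ideal (MonoidAlgebra F QD32)).jacobson) :
    Monoid.exponent V₁ = 16 := by
  have : CharP (MonoidAlgebra F QD32) 2 := charP_of_injective_algebraMap' F 2
  simp only [QD32.jacobson_bot_eq_ker_augmentation, RingHom.mem_ker] at hV
  have hexp (y : V₁) : y ^ 16 = 1 :=
    Subtype.ext <| Units.ext <| pow_char_pow_eq_one_of_sub_one_pow_eq_zero 2 4 <|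
      QD32.pow_sixteen_eq_zero_of_augmentation_eq_zero ((hV y).1 y.2)
  let aUnit := (of F QD32).toHomUnits QD32.a
  have ha : aUnit ∈ V₁ := (hV _).2 <| by
    change augmentation_s13 F QD32 (of F QD32 QD32.a - 1) = 0
    rw [map_sub, augmentation_of_s13, map_one, sub_self]
  have hinj : Function.Injective (of F QD32).toHomUnits :=
    fun _ _ h => of_injective (congrArg Units.val h)
  have hord : orderOf (⟨aUnit, ha⟩ : V₁) = 16 := by
    rw [Subgroup.orderOf_mk, orderOf_injective _ hinj, QD32.orderOf_a]
  exact Nat.dvd_antisymm (Monoid.exponent_dvd_of_forall_pow_eq_one hexp)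
    (hord ▸ Monoid.order_dvd_exponent _)

theorem oneAddJacobson_exponent_QD32 (F : Type) [Field F] [Fintype F] [CharP F 2]
    (n : ℕ) (hn : 0 < n) (hq : Fintype.card F = 2 ^ n)
    (V₁ : Subgroup (MonoidAlgebra F QD32)ˣ)
    (hV : ∀ u : (MonoidAlgebra F QD32)ˣ,
      u ∈ V₁ ↔ (u : MonoidAlgebra F QD32) - 1 ∈ (⊥ : Ideal (MonoidAlgebra F QD32)).jacobson) :
    Monoid.exponent V₁ = 16 :=
  oneAddJacobson_exponent_QD32_general F V₁ hV
end
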